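/- arXiv:1405.5240 — 5 statements merged into one kernel-verified Lean document; each statement's English description precedes it below -/
import Mathlib

section
/- For every real x ≠ 0, ∫_{−∞}^{∞} sinc(u) sinc(u + x) du = π sinc(x); consequently, for every nonzero integer s, ∫_{−∞}^{∞} sinc(u) sinc(u + sπ) du = 0. -/
open MeasureTheory Real

noncomputable section

/-- The (unnormalized) sinc function: `sin u / u`, extended by `1` at `0`. -/
def sinc (u : ℝ) : ℝ := if u = 0 then 1 else Real.sin u / u

/-!
Since `u * sinc u = sin u`, one has
`x sinc u sinc (u + x) = sinc u sin (u + x) - sin u sinc (u + x)`.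
Integrate over `[-R, R]` and shift the second integral by `x`: both terms become integrals of
`sinc u sin (u + y) = cos y · sinc u sin u + sin y · sinc (2u)` over intervals that are symmetric
up to a bounded shift. The odd part `sinc u sin u` then contributes `O(1/R)` and the Dirichlet
integral `∫ sinc = π` does the rest, so `x ∫ sinc u sinc (u + x) du = π sin x`.
The Dirichlet integral is computed along `R = (2n+1)π/2`, where the Dirichlet kernel turns
`∫₀ᴿ sinc` into `π/2` plus a Fourier coefficient of the bounded function `1/sin t - 1/t`, which
vanishes by the Riemann–Lebesgue lemma.
-/

open Filter Topology Set

theorem sinc_eq_real_sinc : _root_.sinc = Real.sinc := rfl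

theorem tendsto_integral_sin_mul_atTop {g : ℝ → ℝ} (hg : Integrable g) :
    Tendsto (fun c : ℝ => ∫ t, sin (c * t) * g t) atTop (𝓝 0) := by
  -- Mathlib's Fourier kernel is `𝐞 (-(t * w)) = exp (-2πi t w)`: frequency `c` is `w = -c / (2π)`.
  have hw : Tendsto (fun c : ℝ => -c / (2 * π)) atTop (cocompact ℝ) :=
    tendsto_cocompact_of_tendsto_dist_comp_atTop 0 <| by
      simpa [Real.dist_eq, abs_div, abs_of_pos pi_pos] using
        tendsto_abs_atTop_atTop.atTop_div_const (by positivity : 0 < |2 * π|)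
  have hRL := (Complex.continuous_im.tendsto 0).comp
    ((Real.tendsto_integral_exp_smul_cocompact fun t => (g t : ℂ)).comp hw)
  refine (hRL.congr fun c => ?_).trans (by simp)
  have hint : Integrable fun t : ℝ => fourierChar (-(t * (-c / (2 * π)))) • (g t : ℂ) :=
    (fourierIntegral_convergent_iff' (ContinuousLinearMap.mul ℝ ℝ) _).2 hg.ofReal
  simp only [Function.comp_apply]
  rw [← RCLike.im_eq_complex_im, ← integral_im hint]
  congr 1 with t
  have hphase : 2 * π * -(t * (-c / (2 * π))) = c * t := by field_simp
  rw [Circle.smul_def, Real.fourierChar_apply, hphase, smul_eq_mul, RCLike.im_to_complex,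
    Complex.im_mul_ofReal, Complex.exp_ofReal_mul_I_im]

theorem tendsto_setIntegral_sin_mul_atTop {g : ℝ → ℝ} {s : Set ℝ} (hs : MeasurableSet s)
    (hg : IntegrableOn g s) : Tendsto (fun c : ℝ => ∫ t in s, sin (c * t) * g t) atTop (𝓝 0) := by
  simpa only [← integral_indicator hs, indicator_mul_right] using
    tendsto_integral_sin_mul_atTop (hg.integrable_indicator hs)

theorem abs_intervalIntegral_le_of_abs_le_inv {f : ℝ → ℝ} {m a b : ℝ} (hm : 0 < m) (ha : m ≤ a)
    (hb : m ≤ b) (hf : ∀ t, 0 < t → |f t| ≤ t⁻¹) : |∫ t in a..b, f t| ≤ |b - a| / m := by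
  rw [div_eq_inv_mul, ← Real.norm_eq_abs]
  refine intervalIntegral.norm_integral_le_of_norm_le_const fun t ht => ?_
  have hmt : m < t := (le_min ha hb).trans_lt ht.1
  exact (hf t (hm.trans hmt)).trans (inv_anti₀ hm hmt.le)

theorem Function.Odd.intervalIntegral_neg_eq_zero {E : Type*} [NormedAddCommGroup E]
    [NormedSpace ℝ E] {f : ℝ → E} (hf : Function.Odd f) (a : ℝ) : ∫ t in -a..a, f t = 0 := by
  have h := intervalIntegral.integral_comp_neg (a := -a) (b := a) f
  simp only [hf _, intervalIntegral.integral_neg, neg_neg] at h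
  have h2 : (2 : ℝ) • ∫ t in -a..a, f t = 0 := by
    rw [two_smul]; nth_rw 1 [← h]; exact neg_add_cancel _
  exact (smul_eq_zero.1 h2).resolve_left two_ne_zero

namespace Real

theorem mul_sinc (x : ℝ) : x * sinc x = sin x := by
  rcases eq_or_ne x 0 with rfl | hx
  · simp
  · rw [sinc_of_ne_zero hx, mul_div_cancel₀ _ hx]

theorem abs_sinc_le_inv {x : ℝ} (hx : 0 < x) : |sinc x| ≤ x⁻¹ := by
  rw [sinc_of_ne_zero hx.ne', abs_div, abs_of_pos hx, div_eq_mul_inv]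
  exact mul_le_of_le_one_left (by positivity) (abs_sin_le_one x)

theorem sinc_mul_cos (x : ℝ) : sinc x * cos x = sinc (2 * x) := by
  rcases eq_or_ne x 0 with rfl | hx
  · simp
  · rw [sinc_of_ne_zero hx, sinc_of_ne_zero (by simpa using hx), sin_two_mul]
    field_simp

def dirichletKernel (n : ℕ) (x : ℝ) : ℝ := 1 + 2 * ∑ k ∈ Finset.range n, cos ((k + 1) * x)

@[fun_prop]
theorem continuous_dirichletKernel (n : ℕ) : Continuous (dirichletKernel n) := by
  unfold dirichletKernel; fun_prop

theorem sin_mul_dirichletKernel_two_mul (n : ℕ) (t : ℝ) :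
    sin t * dirichletKernel n (2 * t) = sin ((2 * n + 1) * t) := by
  induction n with
  | zero => simp [dirichletKernel]
  | succ n ih =>
    have h := two_mul_sin_mul_cos t ((n + 1) * (2 * t))
    rw [show t - (n + 1) * (2 * t) = -((2 * n + 1) * t) by ring, sin_neg,
      show t + (n + 1) * (2 * t) = (2 * (n + 1) + 1) * t by ring] at h
    simp only [dirichletKernel, Finset.sum_range_succ] at ih ⊢
    push_cast
    linear_combination ih + h

theorem integral_dirichletKernel_two_mul (n : ℕ) :
    ∫ t in 0..π / 2, dirichletKernel n (2 * t) = π / 2 := by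
  have hcos (k : ℕ) : ∫ t in 0..π / 2, cos ((k + 1) * (2 * t)) = 0 := by
    simp_rw [← mul_assoc]
    rw [intervalIntegral.integral_comp_mul_left _ (by positivity), integral_cos,
      show (k + 1) * 2 * (π / 2) = (k + 1 : ℕ) * π by push_cast; ring, sin_nat_mul_pi]
    simp
  simp only [dirichletKernel]
  rw [intervalIntegral.integral_add intervalIntegrable_const
      (Continuous.intervalIntegrable (by fun_prop) _ _),
    intervalIntegral.integral_const_mul,
    intervalIntegral.integral_finsetSum fun k _ => Continuous.intervalIntegrable (by fun_prop) _ _]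
  simp [hcos]

theorem inv_sin_sub_inv_mem_Icc {t : ℝ} (ht : t ∈ Ioc 0 (π / 2)) :
    (sin t)⁻¹ - t⁻¹ ∈ Icc 0 1 := by
  obtain ⟨ht0, htπ⟩ := ht
  have hsin : 2 / π * t ≤ sin t := mul_le_sin ht0.le htπ
  have hsin0 : 0 < sin t := lt_of_lt_of_le (by positivity) hsin
  have hcube : t - sin t < t ^ 3 / 6 := by linarith [sin_gt_sub_cube ht0]
  have ht6 : t / 6 ≤ 2 / π := by
    rw [div_le_div_iff₀ (by norm_num) pi_pos]; nlinarith [pi_lt_four, pi_gt_three]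
  rw [show (sin t)⁻¹ - t⁻¹ = (t - sin t) / (t * sin t) by field_simp]
  refine ⟨div_nonneg (by linarith [sin_le ht0.le]) (by positivity), ?_⟩
  rw [div_le_one (by positivity)]
  calc t - sin t ≤ t * t * (t / 6) := by linarith
    _ ≤ t * (2 / π * t) := by nlinarith [mul_le_mul_of_nonneg_left ht6 (mul_self_nonneg t)]
    _ ≤ t * sin t := by gcongr

theorem integrableOn_inv_sin_sub_inv : IntegrableOn (fun t => (sin t)⁻¹ - t⁻¹) (Ioc 0 (π / 2)) :=
  Measure.integrableOn_of_bounded (M := 1) measure_Ioc_lt_top.ne (by fun_prop) <|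
    (ae_restrict_iff' measurableSet_Ioc).2 <| Eventually.of_forall fun t ht => by
      obtain ⟨h0, h1⟩ := inv_sin_sub_inv_mem_Icc ht
      rwa [norm_of_nonneg h0]

theorem integral_sinc_odd_mul_pi_div_two (n : ℕ) :
    ∫ t in 0..(2 * n + 1) * (π / 2), sinc t =
      π / 2 - ∫ t in 0..π / 2, sin ((2 * n + 1) * t) * ((sin t)⁻¹ - t⁻¹) := by
  have hc : (2 * n + 1 : ℝ) ≠ 0 := by positivity
  have hsub : ∀ t ∈ uIoc 0 (π / 2), (2 * n + 1) * sinc ((2 * n + 1) * t) =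
      dirichletKernel n (2 * t) - sin ((2 * n + 1) * t) * ((sin t)⁻¹ - t⁻¹) := by
    intro t ht
    rw [uIoc_of_le (by positivity)] at ht
    have ht0 : t ≠ 0 := ht.1.ne'
    have hsin : sin t ≠ 0 := (sin_pos_of_pos_of_lt_pi ht.1 (by linarith [ht.2, pi_pos])).ne'
    have h1 := mul_sinc ((2 * n + 1) * t)
    have h2 := sin_mul_dirichletKernel_two_mul n t
    field_simp
    linear_combination sin t * h1 - t * h2
  have hint : IntervalIntegrable (fun t => sin ((2 * n + 1) * t) * ((sin t)⁻¹ - t⁻¹))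
      volume 0 (π / 2) := by
    rw [intervalIntegrable_iff_integrableOn_Ioc_of_le (by positivity)]
    exact integrableOn_inv_sin_sub_inv.bdd_mul (c := 1) (by fun_prop)
      (Eventually.of_forall fun t => abs_sin_le_one _)
  calc ∫ t in 0..(2 * n + 1) * (π / 2), sinc t
      = ∫ t in 0..π / 2, (2 * n + 1) * sinc ((2 * n + 1) * t) := by
        rw [intervalIntegral.integral_const_mul, intervalIntegral.integral_comp_mul_left _ hc,
          mul_zero, smul_eq_mul, mul_inv_cancel_left₀ hc]
    _ = ∫ t in 0..π / 2,
          (dirichletKernel n (2 * t) - sin ((2 * n + 1) * t) * ((sin t)⁻¹ - t⁻¹)) :=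
        intervalIntegral.integral_congr_ae (Eventually.of_forall hsub)
    _ = _ := by
        have hD : Continuous fun t => dirichletKernel n (2 * t) := by fun_prop
        rw [intervalIntegral.integral_sub (hD.intervalIntegrable _ _) hint,
          integral_dirichletKernel_two_mul]

theorem tendsto_integral_sinc_odd_mul_pi_div_two :
    Tendsto (fun n : ℕ => ∫ t in 0..(2 * n + 1) * (π / 2), sinc t) atTop (𝓝 (π / 2)) := by
  have hc : Tendsto (fun n : ℕ => (2 * n + 1 : ℝ)) atTop atTop :=
    tendsto_atTop_add_const_right _ 1 (tendsto_natCast_atTop_atTop.const_mul_atTop two_pos)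
  have hRL := (tendsto_setIntegral_sin_mul_atTop measurableSet_Ioc
    integrableOn_inv_sin_sub_inv).comp hc
  simpa only [Function.comp_def, integral_sinc_odd_mul_pi_div_two,
    intervalIntegral.integral_of_le (by positivity : 0 ≤ π / 2), sub_zero]
    using hRL.const_sub (π / 2)

theorem tendsto_integral_sinc_atTop :
    Tendsto (fun R => ∫ t in 0..R, sinc t) atTop (𝓝 (π / 2)) := by
  set N : ℝ → ℕ := fun R => ⌊R / π⌋₊
  set s : ℝ → ℝ := fun R => (2 * N R + 1) * (π / 2)
  have hN : Tendsto N atTop atTop :=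
    tendsto_nat_floor_atTop.comp (tendsto_id.atTop_div_const pi_pos)
  have htail : Tendsto (fun R => ∫ t in s R..R, sinc t) atTop (𝓝 0) := by
    have hbound : Tendsto (fun R : ℝ => π / (R - π)) atTop (𝓝 0) :=
      tendsto_const_nhds.div_atTop (tendsto_atTop_add_const_right _ (-π) tendsto_id)
    refine squeeze_zero_norm' ?_ hbound
    filter_upwards [eventually_gt_atTop π] with R hR
    have h1 : N R * π ≤ R :=
      (le_div_iff₀ pi_pos).1 (Nat.floor_le (div_nonneg (by linarith [pi_pos]) pi_pos.le))
    have h2 : R < (N R + 1) * π := (div_lt_iff₀ pi_pos).1 (Nat.lt_floor_add_one _)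
    calc ‖∫ t in s R..R, sinc t‖ ≤ |R - s R| / (R - π) :=
          abs_intervalIntegral_le_of_abs_le_inv (by linarith) (by simp only [s]; linarith)
            (by linarith) fun _ => abs_sinc_le_inv
      _ ≤ π / (R - π) := by
          gcongr
          exact abs_le.2 ⟨by simp only [s]; linarith, by simp only [s]; linarith⟩
  rw [← add_zero (π / 2)]
  refine ((tendsto_integral_sinc_odd_mul_pi_div_two.comp hN).add htail).congr fun R => ?_
  exact intervalIntegral.integral_add_adjacent_intervals (continuous_sinc.intervalIntegrable _ _)
    (continuous_sinc.intervalIntegrable _ _)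

theorem tendsto_intervalIntegral_sinc {ι : Type*} {l : Filter ι} {a b : ι → ℝ}
    (ha : Tendsto a l atBot) (hb : Tendsto b l atTop) :
    Tendsto (fun i => ∫ t in a i..b i, sinc t) l (𝓝 π) := by
  have hneg (c : ℝ) : ∫ t in c..0, sinc t = ∫ t in 0..-c, sinc t := by
    simpa [sinc_neg] using intervalIntegral.integral_comp_neg (a := c) (b := 0) sinc
  rw [← add_halves π]
  refine ((tendsto_integral_sinc_atTop.comp (tendsto_neg_atBot_atTop.comp ha)).add
    (tendsto_integral_sinc_atTop.comp hb)).congr fun i => ?_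
  simp only [Function.comp_apply, ← hneg]
  exact intervalIntegral.integral_add_adjacent_intervals (continuous_sinc.intervalIntegrable _ _)
    (continuous_sinc.intervalIntegrable _ _)

theorem tendsto_integral_sinc_mul_sin (x : ℝ) :
    Tendsto (fun R => ∫ u in -R + x..R + x, sinc u * sin u) atTop (𝓝 0) := by
  have hcont : Continuous fun u => sinc u * sin u := by fun_prop
  have hbound : Tendsto (fun R : ℝ => 2 * |x| / (R - |x|)) atTop (𝓝 0) :=
    tendsto_const_nhds.div_atTop (tendsto_atTop_add_const_right _ (-|x|) tendsto_id)
  refine squeeze_zero_norm' ?_ hbound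
  filter_upwards [eventually_gt_atTop |x|] with R hR
  have hodd : ∫ u in -R + x..R - x, sinc u * sin u = 0 := by
    rw [show -R + x = -(R - x) by ring]
    exact Function.Odd.intervalIntegral_neg_eq_zero (fun u => by simp [sinc_neg]) _
  rw [← intervalIntegral.integral_add_adjacent_intervals (hcont.intervalIntegrable _ (R - x))
    (hcont.intervalIntegrable _ _), hodd, zero_add, Real.norm_eq_abs]
  calc |∫ u in R - x..R + x, sinc u * sin u| ≤ |R + x - (R - x)| / (R - |x|) :=
        abs_intervalIntegral_le_of_abs_le_inv (by linarith) (by linarith [le_abs_self x])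
          (by linarith [neg_abs_le x]) fun t ht => by
            rw [abs_mul]
            exact (mul_le_of_le_one_right (abs_nonneg _) (abs_sin_le_one t)).trans
              (abs_sinc_le_inv ht)
    _ = 2 * |x| / (R - |x|) := by
        rw [show R + x - (R - x) = 2 * x by ring, abs_mul, abs_two]

theorem tendsto_integral_sinc_mul_sin_add (x y : ℝ) :
    Tendsto (fun R => ∫ u in -R + x..R + x, sinc u * sin (u + y)) atTop (𝓝 (π / 2 * sin y)) := by
  have hsplit (u : ℝ) : sinc u * sin (u + y) = cos y * (sinc u * sin u) + sin y * sinc (2 * u) := by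
    rw [sin_add, ← sinc_mul_cos]; ring
  have hsinc2 : Tendsto (fun R => ∫ u in -R + x..R + x, sinc (2 * u)) atTop (𝓝 (π / 2)) := by
    have h := (tendsto_intervalIntegral_sinc
      (tendsto_atBot_add_const_right _ x tendsto_neg_atTop_atBot |>.const_mul_atBot two_pos)
      (tendsto_atTop_add_const_right _ x tendsto_id |>.const_mul_atTop two_pos)).const_mul 2⁻¹
    rw [← div_eq_inv_mul] at h
    refine h.congr fun R => ?_
    rw [intervalIntegral.integral_comp_mul_left _ two_ne_zero, smul_eq_mul, id]
  have h := ((tendsto_integral_sinc_mul_sin x).const_mul (cos y)).add (hsinc2.const_mul (sin y))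
  rw [mul_zero, zero_add, mul_comm] at h
  refine h.congr fun R => ?_
  simp_rw [hsplit]
  rw [intervalIntegral.integral_add (Continuous.intervalIntegrable (by fun_prop) _ _)
    (Continuous.intervalIntegrable (by fun_prop) _ _), intervalIntegral.integral_const_mul,
    intervalIntegral.integral_const_mul]

theorem integrable_sinc_sq : Integrable fun u => sinc u ^ 2 := by
  refine (integrable_inv_one_add_sq.const_mul 2).mono' (by fun_prop)
    (Eventually.of_forall fun u => ?_)
  rw [norm_pow, Real.norm_eq_abs, sq_abs, ← div_eq_mul_inv, le_div_iff₀ (by positivity),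
    mul_add, mul_one, show sinc u ^ 2 * u ^ 2 = (u * sinc u) ^ 2 by ring, mul_sinc]
  have h1 : sinc u ^ 2 ≤ 1 := by
    rw [← sq_abs]; exact pow_le_one₀ (abs_nonneg _) (abs_sinc_le_one u)
  linarith [sin_sq_le_one u]

theorem integrable_sinc_mul_sinc_add (x : ℝ) : Integrable fun u => sinc u * sinc (u + x) := by
  refine ((integrable_sinc_sq.add (integrable_sinc_sq.comp_add_right x)).div_const 2).mono'
    (by fun_prop) (Eventually.of_forall fun u => ?_)
  rw [Pi.add_apply, norm_mul, Real.norm_eq_abs, Real.norm_eq_abs, le_div_iff₀ two_pos]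
  nlinarith [two_mul_le_add_sq |sinc u| |sinc (u + x)|, sq_abs (sinc u), sq_abs (sinc (u + x))]

theorem mul_sinc_mul_sinc_add (x u : ℝ) :
    x * (sinc u * sinc (u + x)) = sinc u * sin (u + x) - sin u * sinc (u + x) := by
  rw [← mul_sinc u, ← mul_sinc (u + x)]; ring

theorem mul_integral_sinc_mul_sinc_add (x R : ℝ) :
    x * ∫ u in -R..R, sinc u * sinc (u + x) =
      (∫ u in -R..R, sinc u * sin (u + x)) - ∫ u in -R + x..R + x, sinc u * sin (u + -x) := by
  rw [← intervalIntegral.integral_const_mul]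
  simp_rw [mul_sinc_mul_sinc_add]
  rw [intervalIntegral.integral_sub (Continuous.intervalIntegrable (by fun_prop) _ _)
    (Continuous.intervalIntegrable (by fun_prop) _ _)]
  congr 1
  simpa [mul_comm] using
    intervalIntegral.integral_comp_add_right (fun u => sinc u * sin (u + -x)) x

theorem integral_sinc_mul_sinc_add {x : ℝ} (hx : x ≠ 0) :
    ∫ u, sinc u * sinc (u + x) = π * sinc x := by
  have hlim := (intervalIntegral_tendsto_integral (integrable_sinc_mul_sinc_add x)
    tendsto_neg_atTop_atBot tendsto_id).const_mul x
  have hlim₀ :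
      Tendsto (fun R => ∫ u in -R..R, sinc u * sin (u + x)) atTop (𝓝 (π / 2 * sin x)) := by
    simpa using tendsto_integral_sinc_mul_sin_add 0 x
  have hlim' := hlim₀.sub (tendsto_integral_sinc_mul_sin_add x (-x))
  have := tendsto_nhds_unique hlim (hlim'.congr fun R => (mul_integral_sinc_mul_sinc_add x R).symm)
  rw [sin_neg] at this
  rw [sinc_of_ne_zero hx]
  field_simp
  linear_combination this

end Real

/-- Orthogonality of the sinc function: for every real `x ≠ 0`,
`∫ sinc(u) sinc(u+x) du = π sinc(x)`, and consequently the integral vanishes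
at every nonzero integer shift `x = sπ`. -/
theorem sinc_orthogonality :
    (∀ x : ℝ, x ≠ 0 → ∫ u : ℝ, _root_.sinc u * _root_.sinc (u + x) = π * _root_.sinc x) ∧
    (∀ s : ℤ, s ≠ 0 → ∫ u : ℝ, _root_.sinc u * _root_.sinc (u + s * π) = 0) := by
  rw [sinc_eq_real_sinc]
  refine ⟨fun x hx => integral_sinc_mul_sinc_add hx, fun s hs => ?_⟩
  have hsπ : (s : ℝ) * π ≠ 0 := mul_ne_zero (Int.cast_ne_zero.2 hs) pi_ne_zero
  rw [integral_sinc_mul_sinc_add hsπ, sinc_of_ne_zero hsπ, sin_int_mul_pi, zero_div, mul_zero]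

end
end

section
/- There exists a finite constant C such that for all real y: ∫_{−∞}^{∞} |sin(x) sin(x+y)| / |x(x+y)| dx ≤ C log|y|/|y| whenever |y| ≥ e, and ∫_{−∞}^{∞} |sin(x) sin(x+y)| / |x(x+y)| dx ≤ C whenever |y| < e. -/
/-!
Put `F u = (max 1 |u|)⁻¹ = min(1, 1/|u|)`, so that `|sinc u| ≤ F u`. If `|a - b| = r ≥ 2`, one of
`|a|, |b|` is at least `r / 2`, so `F a * F b ≤ (2 / r) * F` of the other point as long as both lie
in `[-2r, 2r]`, while `F a * F b ≤ 2 / a²` once `|a| > 2r`. Hence `F a * F b ≤ k a + k b` with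
`k = (2 / r) * F` on `[-2r, 2r]` and `k u = 2 / u²` outside (`shiftBound r`), and translation
invariance of Lebesgue measure bounds the integral by `2 ∫ k = O(log r / r)`. For small shifts,
`F a * F b ≤ F a ^ 2 + F b ^ 2` gives the same kind of bound with `r = 1 / 2`.
-/

open MeasureTheory Real

noncomputable section

open Set Filter Topology
open scoped ENNReal

section Translation

variable {G : Type*} [MeasurableSpace G] [AddGroup G] [MeasurableAdd G] {μ : Measure G}
  [μ.IsAddRightInvariant]

theorem lintegral_add_comp_add_right {g : G → ℝ≥0∞} (hg : Measurable g) (y : G) :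
    ∫⁻ x, (g x + g (x + y)) ∂μ = 2 * ∫⁻ x, g x ∂μ := by
  rw [lintegral_add_left hg, lintegral_add_right_eq_self g y, two_mul]

end Translation

theorem lintegral_le_two_mul_setLIntegral_Ici_of_even {φ : ℝ → ℝ≥0∞} (hφ : Measurable φ)
    (heven : ∀ u, φ (-u) = φ u) : ∫⁻ u, φ u ≤ 2 * ∫⁻ u in Ici 0, φ u := by
  set g := (Ici (0 : ℝ)).indicator φ
  have hg : Measurable g := hφ.indicator measurableSet_Ici
  calc ∫⁻ u, φ u ≤ ∫⁻ u, (g u + g (-u)) := by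
        refine lintegral_mono fun u => ?_
        rcases le_total 0 u with hu | hu
        · exact (indicator_of_mem (show u ∈ Ici 0 from hu) φ).symm.le.trans le_self_add
        · rw [← heven u]
          exact (indicator_of_mem (show -u ∈ Ici 0 from neg_nonneg.mpr hu) φ).symm.le.trans
            le_add_self
    _ = 2 * ∫⁻ u in Ici 0, φ u := by
        rw [lintegral_add_left hg, lintegral_neg_eq_self g, ← two_mul,
          lintegral_indicator measurableSet_Ici]

theorem lintegral_Ioi_div_sq {c s : ℝ} (hc : 0 ≤ c) (hs : 0 < s) :
    ∫⁻ u in Ioi s, ENNReal.ofReal (c / u ^ 2) = ENNReal.ofReal (c / s) := by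
  have hderiv : ∀ u ∈ Ici s, HasDerivAt (fun u => -c * u⁻¹) (c / u ^ 2) u := fun u hu =>
    ((hasDerivAt_inv (hs.trans_le hu).ne').const_mul (-c)).congr_deriv (by ring)
  have hpos : ∀ u ∈ Ioi s, 0 ≤ c / u ^ 2 := fun u _ => by positivity
  have hlim : Tendsto (fun u : ℝ => -c * u⁻¹) atTop (𝓝 0) := by
    simpa using tendsto_inv_atTop_zero.const_mul (-c)
  rw [← ofReal_integral_eq_lintegral_ofReal (integrableOn_Ioi_deriv_of_nonneg' hderiv hpos hlim)
    ((ae_restrict_iff' measurableSet_Ioi).mpr (ae_of_all _ hpos)),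
    integral_Ioi_of_hasDerivAt_of_nonneg' hderiv hpos hlim]
  congr 1; ring

def sincBound (u : ℝ) : ℝ := (max 1 |u|)⁻¹

lemma sincBound_nonneg (u : ℝ) : 0 ≤ sincBound u := by unfold sincBound; positivity

lemma sincBound_le_inv {s u : ℝ} (hs : 0 < s) (h : s ≤ |u|) : sincBound u ≤ s⁻¹ :=
  inv_anti₀ hs (le_max_of_le_right h)

lemma sincBound_of_abs_le_one {u : ℝ} (h : |u| ≤ 1) : sincBound u = 1 := by
  simp [sincBound, max_eq_left h]

lemma sincBound_of_one_le_abs {u : ℝ} (h : 1 ≤ |u|) : sincBound u = |u|⁻¹ := by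
  rw [sincBound, max_eq_right h]

lemma continuous_sincBound : Continuous sincBound :=
  (continuous_const.max continuous_abs).inv₀ fun u => (one_pos.trans_le (le_max_left 1 |u|)).ne'

lemma abs_sinc_le_sincBound (u : ℝ) : |_root_.sinc u| ≤ sincBound u := by
  rcases le_total |u| 1 with h | h
  · rw [sincBound_of_abs_le_one h]
    exact Real.abs_sinc_le_one u
  · have hu : u ≠ 0 := by rintro rfl; norm_num at h
    rw [sincBound_of_one_le_abs h, _root_.sinc, if_neg hu, abs_div, div_eq_mul_inv]
    exact mul_le_of_le_one_left (by positivity) (abs_sin_le_one u)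

lemma integral_sincBound {R : ℝ} (hR : 1 ≤ R) : ∫ u in 0..R, sincBound u = 1 + log R := by
  have hint : ∀ a b : ℝ, IntervalIntegrable sincBound volume a b := fun a b =>
    continuous_sincBound.intervalIntegrable a b
  have h01 : ∫ u in (0 : ℝ)..1, sincBound u = 1 := by
    rw [intervalIntegral.integral_congr (g := fun _ => 1) fun u hu => sincBound_of_abs_le_one ?_]
    · simp
    · rw [uIcc_of_le zero_le_one] at hu
      exact abs_le.mpr ⟨by linarith [hu.1], hu.2⟩
  have h1R : ∫ u in (1 : ℝ)..R, sincBound u = log R := by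
    rw [intervalIntegral.integral_congr (g := fun u => u⁻¹) fun u hu => ?_,
      integral_inv_of_pos one_pos (by linarith), div_one]
    rw [uIcc_of_le hR] at hu
    rw [sincBound_of_one_le_abs (hu.1.trans (le_abs_self u)), abs_of_pos (by linarith [hu.1])]
  rw [← intervalIntegral.integral_add_adjacent_intervals (hint 0 1) (hint 1 R), h01, h1R]

lemma setLIntegral_Icc_sincBound {R : ℝ} (hR : 1 ≤ R) :
    ∫⁻ u in Icc 0 R, ENNReal.ofReal (sincBound u) = ENNReal.ofReal (1 + log R) := by
  rw [← ofReal_integral_eq_lintegral_ofReal (continuous_sincBound.integrableOn_Icc)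
    (ae_of_all _ fun u => sincBound_nonneg u), integral_Icc_eq_integral_Ioc,
    ← intervalIntegral.integral_of_le (by linarith), integral_sincBound hR]

def shiftBound (r u : ℝ) : ℝ := if |u| ≤ 2 * r then 2 / r * sincBound u else 2 / u ^ 2

lemma shiftBound_nonneg {r : ℝ} (hr : 0 ≤ r) (u : ℝ) : 0 ≤ shiftBound r u := by
  unfold shiftBound
  split_ifs
  · exact mul_nonneg (by positivity) (sincBound_nonneg u)
  · positivity

lemma shiftBound_neg (r u : ℝ) : shiftBound r (-u) = shiftBound r u := by
  simp [shiftBound, sincBound]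

lemma measurable_shiftBound (r : ℝ) : Measurable (shiftBound r) :=
  Measurable.ite (measurableSet_le measurable_abs measurable_const)
    (measurable_const.mul continuous_sincBound.measurable) (by fun_prop)

lemma sincBound_mul_le_two_div_sq {a b : ℝ} (ha : 2 ≤ |a|) (hab : 2 * |a - b| ≤ |a|) :
    sincBound a * sincBound b ≤ 2 / a ^ 2 := by
  have hb : |a| / 2 ≤ |b| := by linarith [abs_sub_abs_le_abs_sub a b]
  calc sincBound a * sincBound b ≤ |a|⁻¹ * (|a| / 2)⁻¹ :=
        mul_le_mul (sincBound_le_inv (by linarith) le_rfl) (sincBound_le_inv (by linarith) hb)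
          (sincBound_nonneg b) (by positivity)
    _ = 2 / a ^ 2 := by rw [← sq_abs a]; field_simp

lemma sincBound_mul_le_shiftBound_add {r a b : ℝ} (hr : 2 ≤ r) (hab : |a - b| = r) :
    sincBound a * sincBound b ≤ shiftBound r a + shiftBound r b := by
  wlog hba : |b| ≤ |a| generalizing a b
  · rw [mul_comm, add_comm]
    exact this (by rwa [abs_sub_comm]) (le_of_not_ge hba)
  have ha : r ≤ 2 * |a| := by linarith [abs_sub a b]
  by_cases ha' : |a| ≤ 2 * r
  · have hFa : sincBound a ≤ 2 / r := by
      simpa using sincBound_le_inv (s := r / 2) (by linarith) (by linarith)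
    calc sincBound a * sincBound b ≤ 2 / r * sincBound b :=
          mul_le_mul_of_nonneg_right hFa (sincBound_nonneg b)
      _ = shiftBound r b := by rw [shiftBound, if_pos (hba.trans ha')]
      _ ≤ shiftBound r a + shiftBound r b :=
          le_add_of_nonneg_left (shiftBound_nonneg (by linarith) a)
  · calc sincBound a * sincBound b ≤ 2 / a ^ 2 :=
          sincBound_mul_le_two_div_sq (by linarith) (by linarith)
      _ = shiftBound r a := by rw [shiftBound, if_neg ha']
      _ ≤ shiftBound r a + shiftBound r b :=
          le_add_of_nonneg_right (shiftBound_nonneg (by linarith) b)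

lemma sincBound_sq_le_shiftBound_half (u : ℝ) : sincBound u ^ 2 ≤ shiftBound (1 / 2) u := by
  unfold shiftBound
  split_ifs with hu
  · rw [sincBound_of_abs_le_one (by linarith)]
    norm_num
  · rw [sincBound_of_one_le_abs (by linarith), inv_pow, sq_abs, div_eq_mul_inv]
    exact le_mul_of_one_le_left (by positivity) one_le_two

lemma sincBound_mul_le_shiftBound_half_add (a b : ℝ) :
    sincBound a * sincBound b ≤ shiftBound (1 / 2) a + shiftBound (1 / 2) b := by
  nlinarith [sq_nonneg (sincBound a - sincBound b), sincBound_sq_le_shiftBound_half a,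
    sincBound_sq_le_shiftBound_half b]

lemma lintegral_shiftBound_le {r : ℝ} (hr : 1 / 2 ≤ r) :
    ∫⁻ u, ENNReal.ofReal (shiftBound r u) ≤ ENNReal.ofReal ((6 + 4 * log (2 * r)) / r) := by
  have hr0 : 0 < r := by linarith
  have hnear : ∫⁻ u in Icc 0 (2 * r), ENNReal.ofReal (shiftBound r u)
      = ENNReal.ofReal (2 / r * (1 + log (2 * r))) := by
    rw [setLIntegral_congr_fun measurableSet_Icc
        (g := fun u => ENNReal.ofReal (2 / r) * ENNReal.ofReal (sincBound u)) fun u hu => ?_,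
      lintegral_const_mul _ continuous_sincBound.measurable.ennreal_ofReal,
      setLIntegral_Icc_sincBound (by linarith), ← ENNReal.ofReal_mul (by positivity)]
    rw [shiftBound, if_pos (abs_le.mpr ⟨by linarith [hu.1], hu.2⟩),
      ENNReal.ofReal_mul (by positivity)]
  have hfar : ∫⁻ u in Ioi (2 * r), ENNReal.ofReal (shiftBound r u) = ENNReal.ofReal (1 / r) := by
    rw [setLIntegral_congr_fun measurableSet_Ioi (g := fun u => ENNReal.ofReal (2 / u ^ 2))
        fun u hu => ?_, lintegral_Ioi_div_sq zero_le_two (by positivity)]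
    · congr 1; field_simp
    · rw [shiftBound, if_neg (not_le.mpr (hu.out.trans_le (le_abs_self u)))]
  calc ∫⁻ u, ENNReal.ofReal (shiftBound r u)
      ≤ 2 * ∫⁻ u in Ici 0, ENNReal.ofReal (shiftBound r u) :=
        lintegral_le_two_mul_setLIntegral_Ici_of_even (measurable_shiftBound r).ennreal_ofReal
          fun u => by rw [shiftBound_neg]
    _ = 2 * (ENNReal.ofReal (2 / r * (1 + log (2 * r))) + ENNReal.ofReal (1 / r)) := by
        rw [← Icc_union_Ioi_eq_Ici (a := 0) (b := 2 * r) (by positivity),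
          lintegral_union measurableSet_Ioi
            ((Iic_disjoint_Ioi le_rfl).mono_left Icc_subset_Iic_self), hnear, hfar]
    _ = ENNReal.ofReal ((6 + 4 * log (2 * r)) / r) := by
        have hlog : 0 ≤ log (2 * r) := log_nonneg (by linarith)
        rw [← ENNReal.ofReal_add (by positivity) (by positivity), ← ENNReal.ofReal_ofNat 2,
          ← ENNReal.ofReal_mul zero_le_two]
        congr 1; field_simp; ring

lemma abs_sinc_mul_sinc_le (a b : ℝ) :
    |_root_.sinc a * _root_.sinc b| ≤ sincBound a * sincBound b := by
  rw [abs_mul]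
  exact mul_le_mul (abs_sinc_le_sincBound a) (abs_sinc_le_sincBound b) (abs_nonneg _)
    (sincBound_nonneg a)

lemma lintegral_abs_sinc_mul_sinc_add_le {r y : ℝ} (hr : 1 / 2 ≤ r)
    (hbound : ∀ x, sincBound x * sincBound (x + y) ≤ shiftBound r x + shiftBound r (x + y)) :
    ∫⁻ x, ENNReal.ofReal |_root_.sinc x * _root_.sinc (x + y)| ≤
      ENNReal.ofReal (2 * ((6 + 4 * log (2 * r)) / r)) := by
  have hk := shiftBound_nonneg (r := r) (by linarith)
  calc ∫⁻ x, ENNReal.ofReal |_root_.sinc x * _root_.sinc (x + y)|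
      ≤ ∫⁻ x, (ENNReal.ofReal (shiftBound r x) + ENNReal.ofReal (shiftBound r (x + y))) :=
        lintegral_mono fun x => by
          rw [← ENNReal.ofReal_add (hk x) (hk (x + y))]
          exact ENNReal.ofReal_le_ofReal ((abs_sinc_mul_sinc_le x (x + y)).trans (hbound x))
    _ = 2 * ∫⁻ x, ENNReal.ofReal (shiftBound r x) :=
        lintegral_add_comp_add_right (measurable_shiftBound r).ennreal_ofReal y
    _ ≤ 2 * ENNReal.ofReal ((6 + 4 * log (2 * r)) / r) := by
        gcongr
        exact lintegral_shiftBound_le hr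
    _ = ENNReal.ofReal (2 * ((6 + 4 * log (2 * r)) / r)) := by
        rw [ENNReal.ofReal_mul zero_le_two, ENNReal.ofReal_ofNat]

/-- There is a finite constant `C` such that
`∫ |sin(x) sin(x+y)| / |x (x+y)| dx ≤ C log|y|/|y|` when `|y| ≥ e`, and the
integral is bounded by `C` when `|y| < e`. -/
theorem integral_abs_sinc_sinc_shift_bound :
    ∃ C : ℝ,
      (∀ y : ℝ, Real.exp 1 ≤ |y| →
        ∫⁻ x : ℝ, ENNReal.ofReal |_root_.sinc x * _root_.sinc (x + y)| ≤
          ENNReal.ofReal (C * Real.log |y| / |y|)) ∧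
      (∀ y : ℝ, |y| < Real.exp 1 →
        ∫⁻ x : ℝ, ENNReal.ofReal |_root_.sinc x * _root_.sinc (x + y)| ≤ ENNReal.ofReal C) := by
  refine ⟨28, fun y hy => ?_, fun y _ => ?_⟩
  · have hy2 : 2 ≤ |y| := by linarith [add_one_le_exp (1 : ℝ)]
    have hlog : 1 ≤ log |y| := by rwa [le_log_iff_exp_le (by linarith)]
    refine (lintegral_abs_sinc_mul_sinc_add_le (by linarith) fun x =>
      sincBound_mul_le_shiftBound_add hy2 (by rw [sub_add_cancel_left, abs_neg])).trans
      (ENNReal.ofReal_le_ofReal ?_)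
    rw [← mul_div_assoc, log_mul two_ne_zero (by linarith)]
    exact div_le_div_of_nonneg_right (by linarith [log_two_lt_d9]) (abs_nonneg y)
  · refine (lintegral_abs_sinc_mul_sinc_add_le le_rfl fun x =>
      sincBound_mul_le_shiftBound_half_add x (x + y)).trans (ENNReal.ofReal_le_ofReal ?_)
    norm_num

end
end

section
/- For every integer p ≥ 1 there exists a finite constant C_p such that ∫_{ℝ^p} |sinc(x₁ + ⋯ + x_p)| · ∏_{j=1}^{p} |sinc(x_j)| dx₁ ⋯ dx_p ≤ C_p. -/
/-!
Let `F_k(s) = ∫_{ℝ^k} |sinc(s + x₁ + ⋯ + x_k)| ∏ |sinc(x_j)| dx`. Since `|sinc x| ≤ 2 / (1 + |x|)`,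
induction on `k` gives `F_k(s) ≤ D_k (1 + |s|)^(-4^(-k))`; the theorem is the case `s = 0`.
The inductive step convolves `(1 + |x|)⁻¹` with `(1 + |x|)^(-b)`: as
`1 + |s| ≤ (1 + |x|)(1 + |s + x|)`, the product `(1 + |x|)⁻¹ (1 + |s + x|)^(-b)` is at most
`(1 + |s|)^(-b/4)` times `(1 + |x|)^(-1-b/2) + (1 + |s + x|)^(-1-b/2)`, which is integrable.
-/

open MeasureTheory Real
open scoped BigOperators ENNReal NNReal

noncomputable section

lemma abs_sinc_le_two_mul_inv (x : ℝ) : |Real.sinc x| ≤ 2 * (1 + |x|)⁻¹ := by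
  rw [← div_eq_mul_inv, le_div_iff₀ (by positivity)]
  have hx : |x| * |Real.sinc x| ≤ 1 := by
    rcases eq_or_ne x 0 with rfl | hx
    · simp
    · rw [Real.sinc_of_ne_zero hx, ← abs_mul, mul_div_cancel₀ _ hx]
      exact abs_sin_le_one x
  nlinarith [Real.abs_sinc_le_one x]

lemma ofReal_abs_sinc_le (x : ℝ) :
    ENNReal.ofReal |Real.sinc x| ≤ 2 * ENNReal.ofReal ((1 + |x|)⁻¹) := by
  rw [← ENNReal.ofReal_ofNat 2, ← ENNReal.ofReal_mul zero_le_two]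
  exact ENNReal.ofReal_le_ofReal (abs_sinc_le_two_mul_inv x)

/-- In logarithmic coordinates this is `-x - b y ≤ -(b/4)(x + y) - (1 + b/2) min x y`. -/
lemma inv_mul_rpow_neg_le {u v b : ℝ} (hu : 0 < u) (hv : 0 < v) (hb0 : 0 ≤ b) (hb4 : b ≤ 4) :
    u⁻¹ * v ^ (-b) ≤ (u * v) ^ (-(b / 4)) * (u ^ (-(1 + b / 2)) + v ^ (-(1 + b / 2))) := by
  rw [← rpow_neg_one u, rpow_def_of_pos hu, rpow_def_of_pos hv, rpow_def_of_pos (mul_pos hu hv),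
    rpow_def_of_pos hu, rpow_def_of_pos hv, log_mul hu.ne' hv.ne', ← exp_add]
  have hA := (exp_pos ((log u + log v) * -(b / 4))).le
  rcases le_total (log u) (log v) with h | h
  · calc exp (log u * -1 + log v * -b)
          ≤ exp ((log u + log v) * -(b / 4)) * exp (log u * -(1 + b / 2)) := by
            rw [← exp_add]; exact exp_le_exp.2 (by nlinarith)
      _ ≤ _ := mul_le_mul_of_nonneg_left (le_add_of_nonneg_right (exp_pos _).le) hA
  · calc exp (log u * -1 + log v * -b)
          ≤ exp ((log u + log v) * -(b / 4)) * exp (log v * -(1 + b / 2)) := by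
            rw [← exp_add]; exact exp_le_exp.2 (by nlinarith)
      _ ≤ _ := mul_le_mul_of_nonneg_left (le_add_of_nonneg_left (exp_pos _).le) hA

lemma lintegral_inv_one_add_abs_mul_rpow_le {b : ℝ} (hb0 : 0 < b) (hb4 : b ≤ 4) :
    ∃ C : ℝ≥0, ∀ s : ℝ,
      ∫⁻ x, ENNReal.ofReal ((1 + |x|)⁻¹) * ENNReal.ofReal ((1 + |s + x|) ^ (-b)) ≤
        C * ENNReal.ofReal ((1 + |s|) ^ (-(b / 4))) := by
  set e := 1 + b / 2 with he_def
  set I := ∫⁻ x : ℝ, ENNReal.ofReal ((1 + |x|) ^ (-e))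
  have hI : I ≠ ∞ := by
    have he : (Module.finrank ℝ ℝ : ℝ) < e := by
      rw [Module.finrank_self, Nat.cast_one]; linarith [he_def]
    simpa [I] using (finite_integral_one_add_norm (μ := (volume : Measure ℝ)) he).ne
  refine ⟨2 * I.toNNReal, fun s => ?_⟩
  have hpoint (x : ℝ) : (1 + |x|)⁻¹ * (1 + |s + x|) ^ (-b) ≤
      (1 + |s|) ^ (-(b / 4)) * ((1 + |x|) ^ (-e) + (1 + |s + x|) ^ (-e)) := by
    refine (inv_mul_rpow_neg_le (by positivity) (by positivity) hb0.le hb4).trans ?_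
    refine mul_le_mul_of_nonneg_right (rpow_le_rpow_of_nonpos (by positivity) ?_ (by linarith))
      (by positivity)
    have hs : |s| ≤ |s + x| + |x| := by simpa using abs_add_le (s + x) (-x)
    nlinarith [abs_nonneg x, abs_nonneg (s + x)]
  calc ∫⁻ x, ENNReal.ofReal ((1 + |x|)⁻¹) * ENNReal.ofReal ((1 + |s + x|) ^ (-b))
      ≤ ∫⁻ x, ENNReal.ofReal ((1 + |s|) ^ (-(b / 4))) *
          (ENNReal.ofReal ((1 + |x|) ^ (-e)) + ENNReal.ofReal ((1 + |s + x|) ^ (-e))) := by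
        refine lintegral_mono fun x => ?_
        rw [← ENNReal.ofReal_mul (by positivity), ← ENNReal.ofReal_add (by positivity)
          (by positivity), ← ENNReal.ofReal_mul (by positivity)]
        exact ENNReal.ofReal_le_ofReal (hpoint x)
    _ = ENNReal.ofReal ((1 + |s|) ^ (-(b / 4))) * (I + I) := by
        rw [lintegral_const_mul' _ _ ENNReal.ofReal_ne_top, lintegral_add_left (by fun_prop),
          lintegral_add_left_eq_self (fun x => ENNReal.ofReal ((1 + |x|) ^ (-e))) s]
    _ = (2 * I.toNNReal : ℝ≥0) * ENNReal.ofReal ((1 + |s|) ^ (-(b / 4))) := by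
        push_cast
        rw [ENNReal.coe_toNNReal hI, two_mul, mul_comm]

/-- The `(k + 1)`-fold convolution power of `|sinc|` at `s` (as `|sinc|` is even). -/
def absSincConv (k : ℕ) (s : ℝ) : ℝ≥0∞ :=
  ∫⁻ x : Fin k → ℝ, ENNReal.ofReal (|Real.sinc (s + ∑ j, x j)| * ∏ j, |Real.sinc (x j)|)

lemma absSincConv_succ_le (k : ℕ) (s : ℝ) :
    absSincConv (k + 1) s ≤ ∫⁻ a, ENNReal.ofReal |Real.sinc a| * absSincConv k (s + a) := by
  have hsplit := (volume_preserving_piFinSuccAbove (fun _ : Fin (k + 1) => ℝ) 0).symm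
  rw [absSincConv, ← hsplit.lintegral_comp_emb (MeasurableEquiv.measurableEmbedding _)]
  refine (lintegral_prod_le _).trans (lintegral_mono fun a => ?_)
  rw [absSincConv, ← lintegral_const_mul' _ _ ENNReal.ofReal_ne_top]
  refine le_of_eq (lintegral_congr fun y => ?_)
  simp only [MeasurableEquiv.piFinSuccAbove_symm_apply, Fin.insertNthEquiv_apply,
    Fin.insertNth_zero', Fin.prod_univ_succ, Fin.cons_zero, Fin.cons_succ, Fin.sum_cons]
  rw [← ENNReal.ofReal_mul (abs_nonneg _), add_assoc]
  ring_nf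

lemma absSincConv_le (k : ℕ) :
    ∃ D : ℝ≥0, ∀ s, absSincConv k s ≤ D * ENNReal.ofReal ((1 + |s|) ^ (-((4 : ℝ) ^ k)⁻¹)) := by
  induction k with
  | zero =>
    refine ⟨2, fun s => ?_⟩
    simpa [absSincConv, rpow_neg_one, volume_pi] using ofReal_abs_sinc_le s
  | succ k ih =>
    obtain ⟨D, hD⟩ := ih
    set b := ((4 : ℝ) ^ k)⁻¹
    have hb4 : b ≤ 4 := (inv_le_one_of_one_le₀ (one_le_pow₀ (by norm_num))).trans (by norm_num)
    obtain ⟨C, hC⟩ := lintegral_inv_one_add_abs_mul_rpow_le (b := b) (by positivity) hb4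
    refine ⟨2 * D * C, fun s => ?_⟩
    have hexp : ((4 : ℝ) ^ (k + 1))⁻¹ = b / 4 := by rw [pow_succ, mul_inv, div_eq_mul_inv]
    calc absSincConv (k + 1) s
        ≤ ∫⁻ a, ENNReal.ofReal |Real.sinc a| * absSincConv k (s + a) := absSincConv_succ_le k s
      _ ≤ ∫⁻ a, 2 * ENNReal.ofReal ((1 + |a|)⁻¹) * (D * ENNReal.ofReal ((1 + |s + a|) ^ (-b))) :=
          lintegral_mono fun a => mul_le_mul' (ofReal_abs_sinc_le a) (hD (s + a))
      _ = 2 * D * ∫⁻ a, ENNReal.ofReal ((1 + |a|)⁻¹) * ENNReal.ofReal ((1 + |s + a|) ^ (-b)) := by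
          rw [← lintegral_const_mul' _ _ (by finiteness)]
          congr with a
          ring
      _ ≤ 2 * D * (C * ENNReal.ofReal ((1 + |s|) ^ (-(b / 4)))) := by gcongr; exact hC s
      _ = ↑(2 * D * C) * ENNReal.ofReal ((1 + |s|) ^ (-((4 : ℝ) ^ (k + 1))⁻¹)) := by
          rw [hexp]; push_cast; ring

/-- For every `p ≥ 1` there is a finite constant `C_p` such that
`∫_{ℝ^p} |sinc(x₁ + ⋯ + x_p)| ∏_j |sinc(x_j)| dx ≤ C_p`. -/
theorem integral_abs_sinc_sum_mul_prod_le :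
    ∀ p : ℕ, 1 ≤ p → ∃ Cp : ℝ,
      ∫⁻ x : Fin p → ℝ,
          ENNReal.ofReal (|_root_.sinc (∑ j, x j)| * ∏ j, |_root_.sinc (x j)|) ≤
        ENNReal.ofReal Cp := by
  intro p _
  obtain ⟨D, hD⟩ := absSincConv_le p
  refine ⟨D, ?_⟩
  rw [show _root_.sinc = Real.sinc from rfl]
  simpa [absSincConv] using hD 0

end
end

section
/- There exists a finite constant C, independent of a, such that for every integer a ≥ 2, Σ_{m=−a}^{a} ∫_{−∞}^{∞} |sin²(x) / (x(x + mπ))| dx ≤ C log²(a). -/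
open MeasureTheory Real
open scoped BigOperators

noncomputable section

/-!
Write `g u = 1 / max 1 |u|`, so that `|sinc u| ≤ g u`. Since `|x| + |x + c| ≥ |c|`, the smaller of
`g x` and `g (x + c)` is at most `1 / R` for `R = max 1 (|c| / 2)`, whence
`g x * g (x + c) ≤ h x + h (x + c)` with `h = g * min (1 / R) g`. Splitting the line at `|u| = 1`
and `|u| = R` gives `∫ h ≤ 2 (2 + log R) / R`. For `c = mπ` with `|m| ≤ a` this bounds the `m`-th
integral by `O(log a / max 1 |m|)`, and the harmonic sum over `|m| ≤ a` contributes another `log a`.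
-/

open Set
open scoped ENNReal

theorem mul_le_mul_min_add_mul_min {u v b : ℝ} (hu : 0 ≤ u) (hv : 0 ≤ v) (h : min u v ≤ b) :
    u * v ≤ u * min b u + v * min b v := by
  have hb : 0 ≤ b := (le_min hu hv).trans h
  rcases le_total u v with huv | hvu
  · have : u ≤ min b v := le_min (by simpa [huv] using h) huv
    nlinarith [mul_nonneg hu (le_min hb hu)]
  · have : v ≤ min b u := le_min (by simpa [hvu] using h) hvu
    nlinarith [mul_nonneg hv (le_min hb hv)]

theorem lintegral_comp_abs (f : ℝ → ℝ≥0∞) : ∫⁻ x, f |x| = 2 * ∫⁻ x in Ioi 0, f x := by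
  have hpos : ∫⁻ x in Ioi 0, f |x| = ∫⁻ x in Ioi 0, f x :=
    setLIntegral_congr_fun measurableSet_Ioi fun x hx => by rw [abs_of_pos hx]
  have hneg : ∫⁻ x in Iic 0, f |x| = ∫⁻ x in Ioi 0, f |x| := by
    have := (Measure.measurePreserving_neg (volume : Measure ℝ)).setLIntegral_comp_preimage_emb
      (MeasurableEquiv.neg ℝ).measurableEmbedding (fun x => f |x|) (Ici 0)
    simpa [restrict_Ioi_eq_restrict_Ici] using this
  rw [← lintegral_add_compl _ measurableSet_Ioi, compl_Ioi, hneg, hpos, two_mul]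

theorem lintegral_Ioc_one_inv {R : ℝ} (hR : 1 ≤ R) :
    ∫⁻ t in Ioc 1 R, ENNReal.ofReal t⁻¹ = ENNReal.ofReal (log R) := by
  have hint : IntegrableOn (fun t : ℝ => t⁻¹) (Ioc 1 R) :=
    (intervalIntegrable_iff_integrableOn_Ioc_of_le hR).1 <|
      intervalIntegral.intervalIntegrable_inv (fun t ht => by
        rw [uIcc_of_le hR] at ht; exact (one_pos.trans_le ht.1).ne') continuousOn_id
  rw [← ofReal_integral_eq_lintegral_ofReal hint, ← intervalIntegral.integral_of_le hR,
    integral_inv_of_pos one_pos (by linarith), div_one]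
  filter_upwards [ae_restrict_mem measurableSet_Ioc] with t ht
  exact inv_nonneg.2 (zero_le_one.trans ht.1.le)

theorem lintegral_Ioi_rpow_neg_two {R : ℝ} (hR : 0 < R) :
    ∫⁻ t in Ioi R, ENNReal.ofReal (t ^ (-2 : ℝ)) = ENNReal.ofReal R⁻¹ := by
  rw [← ofReal_integral_eq_lintegral_ofReal (integrableOn_Ioi_rpow_of_lt (by norm_num) hR),
    integral_Ioi_rpow_of_lt (by norm_num) hR]
  · norm_num [rpow_neg_one]
  · filter_upwards [ae_restrict_mem measurableSet_Ioi] with t ht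
    exact rpow_nonneg (hR.trans ht).le _

def sincEnvelope (u : ℝ) : ℝ := (max 1 |u|)⁻¹

theorem sincEnvelope_nonneg (u : ℝ) : 0 ≤ sincEnvelope u := by
  unfold sincEnvelope; positivity

theorem sincEnvelope_le_one (u : ℝ) : sincEnvelope u ≤ 1 :=
  inv_le_one_of_one_le₀ (le_max_left _ _)

theorem sincEnvelope_abs (u : ℝ) : sincEnvelope |u| = sincEnvelope u := by
  simp [sincEnvelope]

theorem sincEnvelope_of_one_le {u : ℝ} (hu : 1 ≤ u) : sincEnvelope u = u⁻¹ := by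
  rw [sincEnvelope, abs_of_nonneg (by linarith), max_eq_right hu]

theorem sincEnvelope_le_inv {R u : ℝ} (hR : 0 < R) (h : R ≤ max 1 |u|) :
    sincEnvelope u ≤ R⁻¹ :=
  inv_anti₀ hR h

theorem abs_sinc_le_sincEnvelope (u : ℝ) : |_root_.sinc u| ≤ sincEnvelope u := by
  have hone : |_root_.sinc u| ≤ 1 := by
    by_cases hu : u = 0
    · simp [_root_.sinc, hu]
    · rw [_root_.sinc, if_neg hu, abs_div, div_le_one (abs_pos.2 hu)]
      exact abs_sin_le_abs
  have hmul : |u| * |_root_.sinc u| ≤ 1 := by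
    by_cases hu : u = 0
    · simp [hu]
    · rw [_root_.sinc, if_neg hu, abs_div, mul_div_cancel₀ _ (abs_ne_zero.2 hu)]
      exact abs_sin_le_one u
  rw [sincEnvelope, ← one_div, le_div_iff₀ (by positivity), mul_max_of_nonneg _ _ (abs_nonneg _)]
  exact max_le (by simpa using hone) (by simpa [mul_comm] using hmul)

theorem min_sincEnvelope_le {c R : ℝ} (hR : 1 ≤ R) (hRc : R ≤ max 1 (|c| / 2)) (x : ℝ) :
    min (sincEnvelope x) (sincEnvelope (x + c)) ≤ R⁻¹ := by
  have hc : |c| ≤ |x + c| + |x| := by simpa using abs_sub (x + c) x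
  rcases le_total |x| |x + c| with h | h
  · exact (min_le_right _ _).trans <| sincEnvelope_le_inv (by linarith) <|
      hRc.trans <| max_le_max le_rfl (by linarith)
  · exact (min_le_left _ _).trans <| sincEnvelope_le_inv (by linarith) <|
      hRc.trans <| max_le_max le_rfl (by linarith)

def sincEnvelopeCut (R u : ℝ) : ℝ := sincEnvelope u * min R⁻¹ (sincEnvelope u)

theorem sincEnvelopeCut_nonneg {R : ℝ} (hR : 0 ≤ R) (u : ℝ) : 0 ≤ sincEnvelopeCut R u :=
  mul_nonneg (sincEnvelope_nonneg u) (le_min (inv_nonneg.2 hR) (sincEnvelope_nonneg u))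

theorem sincEnvelopeCut_le_mul_inv (R u : ℝ) : sincEnvelopeCut R u ≤ sincEnvelope u * R⁻¹ :=
  mul_le_mul_of_nonneg_left (min_le_left _ _) (sincEnvelope_nonneg u)

theorem sincEnvelopeCut_le_sq (R u : ℝ) : sincEnvelopeCut R u ≤ sincEnvelope u ^ 2 := by
  rw [sq]; exact mul_le_mul_of_nonneg_left (min_le_right _ _) (sincEnvelope_nonneg u)

theorem measurable_sincEnvelopeCut (R : ℝ) : Measurable (sincEnvelopeCut R) := by
  unfold sincEnvelopeCut sincEnvelope; fun_prop

theorem sincEnvelope_mul_le {c R : ℝ} (hR : 1 ≤ R) (hRc : R ≤ max 1 (|c| / 2)) (x : ℝ) :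
    sincEnvelope x * sincEnvelope (x + c) ≤ sincEnvelopeCut R x + sincEnvelopeCut R (x + c) :=
  mul_le_mul_min_add_mul_min (sincEnvelope_nonneg _) (sincEnvelope_nonneg _)
    (min_sincEnvelope_le hR hRc x)

theorem lintegral_Ioi_sincEnvelopeCut_le {R : ℝ} (hR : 1 ≤ R) :
    ∫⁻ t in Ioi 0, ENNReal.ofReal (sincEnvelopeCut R t) ≤ ENNReal.ofReal ((2 + log R) / R) := by
  have hR0 : 0 < R := one_pos.trans_le hR
  have hnear : ∫⁻ t in Ioc 0 1, ENNReal.ofReal (sincEnvelopeCut R t) ≤ ENNReal.ofReal R⁻¹ := by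
    calc ∫⁻ t in Ioc 0 1, ENNReal.ofReal (sincEnvelopeCut R t)
        ≤ ∫⁻ _ in Ioc (0 : ℝ) 1, ENNReal.ofReal R⁻¹ := by
          refine lintegral_mono fun t => ENNReal.ofReal_le_ofReal ?_
          exact (sincEnvelopeCut_le_mul_inv R t).trans <| mul_le_of_le_one_left
            (inv_nonneg.2 hR0.le) (sincEnvelope_le_one t)
      _ = ENNReal.ofReal R⁻¹ := by simp
  have hmiddle : ∫⁻ t in Ioc 1 R, ENNReal.ofReal (sincEnvelopeCut R t) ≤
      ENNReal.ofReal (log R) * ENNReal.ofReal R⁻¹ := by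
    calc ∫⁻ t in Ioc 1 R, ENNReal.ofReal (sincEnvelopeCut R t)
        ≤ ∫⁻ t in Ioc 1 R, ENNReal.ofReal t⁻¹ * ENNReal.ofReal R⁻¹ := by
          refine setLIntegral_mono' measurableSet_Ioc fun t ht => ?_
          rw [← ENNReal.ofReal_mul (inv_nonneg.2 (zero_le_one.trans ht.1.le)),
            ← sincEnvelope_of_one_le ht.1.le]
          exact ENNReal.ofReal_le_ofReal (sincEnvelopeCut_le_mul_inv R t)
      _ = ENNReal.ofReal (log R) * ENNReal.ofReal R⁻¹ := by
          rw [lintegral_mul_const' _ _ ENNReal.ofReal_ne_top, lintegral_Ioc_one_inv hR]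
  have hfar : ∫⁻ t in Ioi R, ENNReal.ofReal (sincEnvelopeCut R t) ≤ ENNReal.ofReal R⁻¹ := by
    calc ∫⁻ t in Ioi R, ENNReal.ofReal (sincEnvelopeCut R t)
        ≤ ∫⁻ t in Ioi R, ENNReal.ofReal (t ^ (-2 : ℝ)) := by
          refine setLIntegral_mono' measurableSet_Ioi fun t ht => ENNReal.ofReal_le_ofReal ?_
          rw [rpow_neg (hR0.trans ht).le, rpow_two, ← inv_pow,
            ← sincEnvelope_of_one_le (hR.trans ht.le)]
          exact sincEnvelopeCut_le_sq R t
      _ = ENNReal.ofReal R⁻¹ := lintegral_Ioi_rpow_neg_two hR0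
  calc ∫⁻ t in Ioi 0, ENNReal.ofReal (sincEnvelopeCut R t)
      ≤ (∫⁻ t in Ioc 0 1, ENNReal.ofReal (sincEnvelopeCut R t)) +
          ((∫⁻ t in Ioc 1 R, ENNReal.ofReal (sincEnvelopeCut R t)) +
            ∫⁻ t in Ioi R, ENNReal.ofReal (sincEnvelopeCut R t)) := by
        rw [← Ioc_union_Ioi_eq_Ioi zero_le_one, ← Ioc_union_Ioi_eq_Ioi hR]
        exact (lintegral_union_le _ _ _).trans (add_le_add_right (lintegral_union_le _ _ _) _)
    _ ≤ ENNReal.ofReal R⁻¹ +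
          (ENNReal.ofReal (log R) * ENNReal.ofReal R⁻¹ + ENNReal.ofReal R⁻¹) :=
        add_le_add hnear (add_le_add hmiddle hfar)
    _ = ENNReal.ofReal ((2 + log R) / R) := by
        have hlog : 0 ≤ log R := log_nonneg hR
        have hinv : 0 ≤ R⁻¹ := inv_nonneg.2 hR0.le
        rw [← ENNReal.ofReal_mul hlog, ← ENNReal.ofReal_add (by positivity) hinv,
          ← ENNReal.ofReal_add hinv (by positivity)]
        congr 1; ring

theorem lintegral_sincEnvelopeCut_le {R : ℝ} (hR : 1 ≤ R) :
    ∫⁻ u, ENNReal.ofReal (sincEnvelopeCut R u) ≤ ENNReal.ofReal (2 * (2 + log R) / R) := by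
  have heven (u : ℝ) : sincEnvelopeCut R |u| = sincEnvelopeCut R u := by
    simp only [sincEnvelopeCut, sincEnvelope_abs]
  calc ∫⁻ u, ENNReal.ofReal (sincEnvelopeCut R u)
      = 2 * ∫⁻ t in Ioi 0, ENNReal.ofReal (sincEnvelopeCut R t) := by
        simpa only [heven] using lintegral_comp_abs fun t => ENNReal.ofReal (sincEnvelopeCut R t)
    _ ≤ 2 * ENNReal.ofReal ((2 + log R) / R) := by
        gcongr; exact lintegral_Ioi_sincEnvelopeCut_le hR
    _ = ENNReal.ofReal (2 * (2 + log R) / R) := by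
        rw [mul_div_assoc, ENNReal.ofReal_mul zero_le_two, ENNReal.ofReal_ofNat]

theorem lintegral_abs_sinc_mul_sinc_add_le_s17 {c R : ℝ} (hR : 1 ≤ R) (hRc : R ≤ max 1 (|c| / 2)) :
    ∫⁻ x, ENNReal.ofReal |_root_.sinc x * _root_.sinc (x + c)| ≤
      ENNReal.ofReal (4 * (2 + log R) / R) := by
  have hcut := sincEnvelopeCut_nonneg (zero_le_one.trans hR)
  calc ∫⁻ x, ENNReal.ofReal |_root_.sinc x * _root_.sinc (x + c)|
      ≤ ∫⁻ x, ENNReal.ofReal (sincEnvelopeCut R x) +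
          ENNReal.ofReal (sincEnvelopeCut R (x + c)) := by
        refine lintegral_mono fun x => ?_
        rw [← ENNReal.ofReal_add (hcut _) (hcut _), abs_mul]
        exact ENNReal.ofReal_le_ofReal <| (mul_le_mul (abs_sinc_le_sincEnvelope x)
          (abs_sinc_le_sincEnvelope _) (abs_nonneg _) (sincEnvelope_nonneg x)).trans
          (sincEnvelope_mul_le hR hRc x)
    _ = 2 * ∫⁻ u, ENNReal.ofReal (sincEnvelopeCut R u) := by
        rw [lintegral_add_left (measurable_sincEnvelopeCut R).ennreal_ofReal,
          lintegral_add_right_eq_self (fun u => ENNReal.ofReal (sincEnvelopeCut R u)) c, two_mul]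
    _ ≤ 2 * ENNReal.ofReal (2 * (2 + log R) / R) := by
        gcongr; exact lintegral_sincEnvelopeCut_le hR
    _ = ENNReal.ofReal (4 * (2 + log R) / R) := by
        rw [← ENNReal.ofReal_ofNat 2, ← ENNReal.ofReal_mul zero_le_two]
        congr 1; ring

theorem lintegral_abs_sinc_mul_sinc_add_int_mul_pi_le {a m : ℤ} (ha : 1 ≤ a)
    (hm : m ∈ Finset.Icc (-a) a) :
    ∫⁻ x, ENNReal.ofReal |_root_.sinc x * _root_.sinc (x + m * π)| ≤
      ENNReal.ofReal (4 * (2 + log a) * sincEnvelope m) := by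
  have hma : |(m : ℝ)| ≤ a := by
    rw [Finset.mem_Icc] at hm; exact_mod_cast abs_le.2 hm
  have hRc : max 1 |(m : ℝ)| ≤ max 1 (|m * π| / 2) := by
    rw [abs_mul, abs_of_pos pi_pos]
    exact max_le_max le_rfl (by nlinarith [two_le_pi, abs_nonneg (m : ℝ)])
  refine (lintegral_abs_sinc_mul_sinc_add_le_s17 (le_max_left _ _) hRc).trans
    (ENNReal.ofReal_le_ofReal ?_)
  rw [sincEnvelope, ← div_eq_mul_inv]
  gcongr
  exact max_le (by exact_mod_cast ha) hma

theorem sum_Icc_neg_sincEnvelope_le {a : ℤ} (ha : 1 ≤ a) :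
    ∑ m ∈ Finset.Icc (-a) a, sincEnvelope m ≤ 3 + 2 * log a := by
  induction a, ha using Int.leInduction with
  | base => norm_num [sincEnvelope, show Finset.Icc (-1 : ℤ) 1 = {-1, 0, 1} by rfl]
  | succ n hn ih =>
    have hn0 : (0 : ℝ) < n := by exact_mod_cast hn
    have hstep : ((n : ℝ) + 1)⁻¹ ≤ log (n + 1) - log n := by
      have := one_sub_inv_le_log_of_pos (show 0 < ((n : ℝ) + 1) / n by positivity)
      rwa [log_div (by positivity) hn0.ne', inv_div, one_sub_div (by positivity),
        add_sub_cancel_left, one_div] at this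
    have hIcc : Finset.Icc (-(n + 1)) (n + 1) =
        insert (-(n + 1)) (insert (n + 1) (Finset.Icc (-n) n)) := by
      ext m; simp only [Finset.mem_Icc, Finset.mem_insert]; omega
    rw [hIcc, Finset.sum_insert (by simp; omega), Finset.sum_insert (by simp)]
    push_cast
    rw [← sincEnvelope_abs, abs_neg, sincEnvelope_abs, sincEnvelope_of_one_le (by linarith)]
    linarith

/-- There is a finite constant `C`, independent of `a`, such that for every
integer `a ≥ 2`,
`Σ_{m=-a}^{a} ∫ |sin²(x) / (x(x+mπ))| dx ≤ C log²(a)`. -/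
theorem sum_integral_sinc_shift_le_log_sq :
    ∃ C : ℝ,
      ∀ a : ℤ, 2 ≤ a →
        ∑ m ∈ Finset.Icc (-a) a,
            ∫⁻ x : ℝ, ENNReal.ofReal |_root_.sinc x * _root_.sinc (x + (m : ℝ) * π)| ≤
          ENNReal.ofReal (C * (Real.log a) ^ 2) := by
  refine ⟨160, fun a ha => ?_⟩
  have hlog : 1 / 2 ≤ log a := by
    have : log 2 ≤ log a := log_le_log two_pos (by exact_mod_cast ha)
    linarith [log_two_gt_d9]
  have hK : 0 ≤ 4 * (2 + log a) := by linarith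
  calc ∑ m ∈ Finset.Icc (-a) a,
        ∫⁻ x, ENNReal.ofReal |_root_.sinc x * _root_.sinc (x + m * π)|
      ≤ ∑ m ∈ Finset.Icc (-a) a, ENNReal.ofReal (4 * (2 + log a) * sincEnvelope m) :=
        Finset.sum_le_sum fun m hm => lintegral_abs_sinc_mul_sinc_add_int_mul_pi_le (by omega) hm
    _ = ENNReal.ofReal (4 * (2 + log a) * ∑ m ∈ Finset.Icc (-a) a, sincEnvelope m) := by
        rw [Finset.mul_sum]
        exact (ENNReal.ofReal_sum_of_nonneg (f := fun m : ℤ => 4 * (2 + log a) * sincEnvelope m)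
          fun m _ => mul_nonneg hK (sincEnvelope_nonneg m)).symm
    _ ≤ ENNReal.ofReal (160 * log a ^ 2) := by
        refine ENNReal.ofReal_le_ofReal ?_
        nlinarith [sum_Icc_neg_sincEnvelope_le (show 1 ≤ a by omega)]

end
end

section
/- There exists a finite constant C such that for every integer a ≥ 1, Σ_{m=−a}^{a} ( ∫_{−∞}^{∞} sin²(x)/|x(x+mπ)| dx ) · ( ∫_{−∞}^{∞} sin²(y)/|y(y+mπ)| dy ) ≤ C; in particular the bound is uniform in a. -/
/-! Since `|sinc u| ≤ 2 / (1 + |u|)` and one of `|x|`, `|x + c|` is at least `|c| / 2`,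
splitting the product of the two majorants as `min ^ (3/4) * max ^ (5/4)` gives
`|sinc x * sinc (x + c)| ≲ (1 + |c|)^(-3/4) * ((1 + |x|)^(-5/4) + (1 + |x + c|)^(-5/4))`,
whose right side is integrable in `x`. So the integral at shift `c` is `O((1 + |c|)^(-3/4))`,
its square at `c = mπ` is `O(|m|^(-3/2))`, and the series over all `m ∈ ℤ` converges; its sum
bounds every partial sum. -/

open MeasureTheory Real
open scoped BigOperators

noncomputable section

open scoped ENNReal

theorem abs_sinc_le_two_mul_inv_one_add_abs (u : ℝ) : |_root_.sinc u| ≤ 2 * (1 + |u|)⁻¹ := by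
  rcases eq_or_ne u 0 with rfl | hu
  · norm_num [_root_.sinc]
  have hu' : 0 < |u| := abs_pos.2 hu
  rw [_root_.sinc, if_neg hu, abs_div, div_le_iff₀ hu', ← div_eq_mul_inv, div_mul_eq_mul_div,
    le_div_iff₀ (by positivity)]
  nlinarith [abs_sin_le_abs (x := u), abs_sin_le_one u]

theorem min_inv_one_add_abs_le (x c : ℝ) :
    min (1 + |x|)⁻¹ (1 + |x + c|)⁻¹ ≤ 2 * (1 + |c|)⁻¹ := by
  have key : ∀ y : ℝ, |c| ≤ 2 * |y| → (1 + |y|)⁻¹ ≤ 2 * (1 + |c|)⁻¹ := fun y hy => by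
    rw [← div_eq_mul_inv, le_div_iff₀ (by positivity), inv_mul_le_iff₀ (by positivity)]
    linarith
  have htri : |c| ≤ |x| + |x + c| := by simpa [add_comm] using abs_sub (x + c) x
  rcases le_total |x + c| |x| with h | h
  · exact (min_le_left _ _).trans (key x (by linarith))
  · exact (min_le_right _ _).trans (key (x + c) (by linarith))

theorem mul_le_rpow_mul_rpow_add_rpow {u v ε θ : ℝ} (hu : 0 ≤ u) (hv : 0 ≤ v) (hθ₀ : 0 ≤ θ)
    (hθ₁ : θ ≤ 1) (h : min u v ≤ ε) : u * v ≤ ε ^ θ * (u ^ (2 - θ) + v ^ (2 - θ)) := by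
  wlog huv : u ≤ v generalizing u v
  · rw [mul_comm, add_comm]
    exact this hv hu (by rwa [min_comm]) (le_of_not_ge huv)
  rw [min_eq_left huv] at h
  have hε : 0 ≤ ε ^ θ := rpow_nonneg (hu.trans h) θ
  calc u * v = u ^ θ * (u ^ (1 - θ) * v) := by
        rw [← mul_assoc, ← rpow_add' hu (by norm_num)]; norm_num
    _ ≤ ε ^ θ * (v ^ (1 - θ) * v) := by gcongr
    _ = ε ^ θ * v ^ (2 - θ) := by
        rw [← rpow_add_one' hv (by linarith)]; ring_nf
    _ ≤ ε ^ θ * (u ^ (2 - θ) + v ^ (2 - θ)) := by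
        gcongr
        exact le_add_of_nonneg_left (rpow_nonneg hu _)

theorem abs_sinc_mul_sinc_add_le (x c : ℝ) :
    |_root_.sinc x * _root_.sinc (x + c)| ≤
      4 * (2 * (1 + |c|)⁻¹) ^ (3 / 4 : ℝ) *
        ((1 + |x|) ^ (-(5 / 4) : ℝ) + (1 + |x + c|) ^ (-(5 / 4) : ℝ)) := by
  have hpow : ∀ y : ℝ, ((1 + |y|)⁻¹) ^ (2 - 3 / 4 : ℝ) = (1 + |y|) ^ (-(5 / 4) : ℝ) := fun y => by
    rw [inv_rpow (by positivity), ← rpow_neg (by positivity)]; norm_num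
  calc |_root_.sinc x * _root_.sinc (x + c)|
      ≤ (2 * (1 + |x|)⁻¹) * (2 * (1 + |x + c|)⁻¹) := by
        rw [abs_mul]
        exact mul_le_mul (abs_sinc_le_two_mul_inv_one_add_abs x)
          (abs_sinc_le_two_mul_inv_one_add_abs _) (abs_nonneg _) (by positivity)
    _ = 4 * ((1 + |x|)⁻¹ * (1 + |x + c|)⁻¹) := by ring
    _ ≤ _ := by
        rw [mul_assoc, ← hpow, ← hpow]
        exact mul_le_mul_of_nonneg_left (mul_le_rpow_mul_rpow_add_rpow (by positivity)
          (by positivity) (by norm_num) (by norm_num) (min_inv_one_add_abs_le x c)) (by norm_num)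

def sincCorrelation (c : ℝ) : ℝ≥0∞ := ∫⁻ x, ENNReal.ofReal |_root_.sinc x * _root_.sinc (x + c)|

theorem lintegral_one_add_abs_rpow_ne_top :
    ∫⁻ x : ℝ, ENNReal.ofReal ((1 + |x|) ^ (-(5 / 4) : ℝ)) ≠ ∞ := by
  simpa using (finite_integral_one_add_norm (E := ℝ) (μ := volume) (r := 5 / 4) (by norm_num)).ne

theorem sincCorrelation_le (c : ℝ) :
    sincCorrelation c ≤ ENNReal.ofReal ((2 * (1 + |c|)⁻¹) ^ (3 / 4 : ℝ)) *
      (8 * ∫⁻ x : ℝ, ENNReal.ofReal ((1 + |x|) ^ (-(5 / 4) : ℝ))) := by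
  set w : ℝ → ℝ≥0∞ := fun x => ENNReal.ofReal ((1 + |x|) ^ (-(5 / 4) : ℝ))
  have hw : Measurable w := by fun_prop
  calc sincCorrelation c
      ≤ ∫⁻ x, ENNReal.ofReal (4 * (2 * (1 + |c|)⁻¹) ^ (3 / 4 : ℝ)) * (w x + w (x + c)) := by
        refine lintegral_mono fun x => ?_
        rw [← ENNReal.ofReal_add (by positivity) (by positivity), ← ENNReal.ofReal_mul (by positivity)]
        exact ENNReal.ofReal_le_ofReal (abs_sinc_mul_sinc_add_le x c)
    _ = ENNReal.ofReal (4 * (2 * (1 + |c|)⁻¹) ^ (3 / 4 : ℝ)) * (2 * ∫⁻ x, w x) := by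
        rw [lintegral_const_mul' _ _ ENNReal.ofReal_ne_top, lintegral_add_left hw,
          lintegral_add_right_eq_self w c, ← two_mul]
    _ = _ := by
        rw [ENNReal.ofReal_mul (by norm_num), mul_comm (ENNReal.ofReal 4), mul_assoc, ← mul_assoc _ 2]
        norm_num

theorem summable_inv_one_add_abs_int_mul_rpow {a b : ℝ} (ha : 0 < a) (hb : 1 < b) :
    Summable fun m : ℤ => ((1 + |m * a|)⁻¹) ^ b := by
  refine ((summable_abs_int_rpow hb).mul_left (a⁻¹ ^ b)).of_norm_bounded_eventually ?_
  filter_upwards [Filter.eventually_cofinite_ne 0] with m hm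
  have hm' : 0 < |(m : ℝ)| := abs_pos.2 (Int.cast_ne_zero.2 hm)
  rw [norm_of_nonneg (by positivity), rpow_neg hm'.le, ← inv_rpow hm'.le, ← mul_rpow (by positivity)
    (by positivity), ← mul_inv, abs_mul, abs_of_pos ha]
  gcongr
  linarith

theorem tsum_sincCorrelation_int_mul_pi_sq_ne_top :
    ∑' m : ℤ, sincCorrelation (m * π) * sincCorrelation (m * π) ≠ ∞ := by
  set K := 8 * ∫⁻ x : ℝ, ENNReal.ofReal ((1 + |x|) ^ (-(5 / 4) : ℝ))
  have hK : K ≠ ∞ := ENNReal.mul_ne_top (by norm_num) lintegral_one_add_abs_rpow_ne_top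
  have hterm : ∀ c : ℝ, sincCorrelation c * sincCorrelation c ≤
      K * K * ENNReal.ofReal (2 ^ (3 / 2 : ℝ) * ((1 + |c|)⁻¹) ^ (3 / 2 : ℝ)) := fun c =>
    calc sincCorrelation c * sincCorrelation c
        ≤ (ENNReal.ofReal ((2 * (1 + |c|)⁻¹) ^ (3 / 4 : ℝ)) * K) *
            (ENNReal.ofReal ((2 * (1 + |c|)⁻¹) ^ (3 / 4 : ℝ)) * K) :=
          mul_le_mul' (sincCorrelation_le c) (sincCorrelation_le c)
      _ = K * K * ENNReal.ofReal ((2 * (1 + |c|)⁻¹) ^ (3 / 4 : ℝ) *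
            (2 * (1 + |c|)⁻¹) ^ (3 / 4 : ℝ)) := by
          rw [ENNReal.ofReal_mul (by positivity)]; ring
      _ = _ := by
          rw [← rpow_add (by positivity), ← mul_rpow (by norm_num) (by positivity)]; norm_num
  refine ne_top_of_le_ne_top ?_ (ENNReal.tsum_le_tsum fun m : ℤ => hterm (m * π))
  rw [ENNReal.tsum_mul_left, ← ENNReal.ofReal_tsum_of_nonneg (fun _ => by positivity)
    ((summable_inv_one_add_abs_int_mul_rpow pi_pos (by norm_num)).mul_left _)]
  exact ENNReal.mul_ne_top (ENNReal.mul_ne_top hK hK) ENNReal.ofReal_ne_top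

/-- There is a finite constant `C` such that for every integer `a ≥ 1`,
`Σ_{m=-a}^{a} (∫ sin²(x)/|x(x+mπ)| dx) (∫ sin²(y)/|y(y+mπ)| dy) ≤ C`;
in particular the bound is uniform in `a`. -/
theorem sum_prod_integral_sinc_shift_le :
    ∃ C : ℝ,
      ∀ a : ℤ, 1 ≤ a →
        ∑ m ∈ Finset.Icc (-a) a,
            (∫⁻ x : ℝ, ENNReal.ofReal |_root_.sinc x * _root_.sinc (x + (m : ℝ) * π)|) *
              (∫⁻ y : ℝ, ENNReal.ofReal |_root_.sinc y * _root_.sinc (y + (m : ℝ) * π)|) ≤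
          ENNReal.ofReal C := by
  refine ⟨(∑' m : ℤ, sincCorrelation (m * π) * sincCorrelation (m * π)).toReal, fun a _ => ?_⟩
  rw [ENNReal.ofReal_toReal tsum_sincCorrelation_int_mul_pi_sq_ne_top]
  exact ENNReal.sum_le_tsum _

end
end
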